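/- arXiv:1904.06729 — 6 statements merged into one kernel-verified Lean document; each statement's English description precedes it below -/
import Mathlib

section
/- Let X be a real uniformly smooth Banach space with modulus of smoothness ρ_X, let S ⊆ X be a bounded set and let a ∈ conv S. Then there is an absolute constant C > 0 (independent of X, S, a; one may take C = 16) and a sequence x_1, x_2, … of points of S such that, setting a_k = (1/k)·∑_{i=1}^k x_i, for every integer k ≥ 1 and every real τ > 0 with ρ_X(τ) ≤ 1/k one has ‖a − a_k‖ ≤ C·diam(S)/(k·τ). -/
open Asymptotics Filter Topology

/-- The modulus of smoothness (Lindenstrauss modulus) of a real normed space `X`: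
`ρ_X(τ) = sup { (‖x + τy‖ + ‖x − τy‖)/2 − 1 : ‖x‖ = ‖y‖ ≤ 1 }`. -/
noncomputable def modSmooth (X : Type*) [NormedAddCommGroup X] [NormedSpace ℝ X] (τ : ℝ) : ℝ :=
  sSup {r : ℝ | ∃ x y : X, ‖x‖ = ‖y‖ ∧ ‖y‖ ≤ 1 ∧
    r = (‖x + τ • y‖ + ‖x - τ • y‖) / 2 - 1}

/-! Put `σₙ = ∑_{i<n} (xᵢ - a)` and choose greedily `xₙ ∈ S` with `f xₙ ≤ f a` for a norming
functional `f` of `σₙ`, which is possible since `a ∈ conv S`. Then `‖σₙ - (xₙ - a)‖ ≥ f σₙ = ‖σₙ‖`,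
so the definition of `ρ` gives `‖σₙ₊₁‖ ≤ ‖σₙ‖ + 2‖σₙ‖ ρ(‖xₙ - a‖/‖σₙ‖)`; by convexity of `ρ` this
is at most `‖σₙ‖ + 2 diam S · ρ(τ)/τ` as soon as `‖σₙ‖ ≥ diam S / τ`. Hence
`‖σₖ‖ ≤ (3 + 2kρ(τ)) diam S / τ ≤ 5 diam S / τ` when `ρ(τ) ≤ 1/k`, and `a - aₖ = -σₖ / k`. -/

section

variable {X : Type*} [NormedAddCommGroup X] [NormedSpace ℝ X]

theorem bddAbove_modSmooth_set {τ : ℝ} (hτ : 0 ≤ τ) :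
    BddAbove {r : ℝ | ∃ x y : X, ‖x‖ = ‖y‖ ∧ ‖y‖ ≤ 1 ∧
      r = (‖x + τ • y‖ + ‖x - τ • y‖) / 2 - 1} := by
  refine ⟨τ, fun r ⟨x, y, hxy, hy, hr⟩ => ?_⟩
  have hτy : ‖τ • y‖ ≤ τ := by
    rw [norm_smul, Real.norm_of_nonneg hτ]
    exact mul_le_of_le_one_right hτ hy
  have h₁ := norm_add_le x (τ • y)
  have h₂ := norm_sub_le x (τ • y)
  rw [hr]
  linarith

theorem le_modSmooth {τ : ℝ} (hτ : 0 ≤ τ) {x y : X} (hxy : ‖x‖ = ‖y‖) (hy : ‖y‖ ≤ 1) :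
    (‖x + τ • y‖ + ‖x - τ • y‖) / 2 - 1 ≤ modSmooth X τ :=
  le_csSup (bddAbove_modSmooth_set hτ) ⟨x, y, hxy, hy, rfl⟩

theorem max_sub_one_le_modSmooth [Nontrivial X] {τ : ℝ} (hτ : 0 ≤ τ) :
    max (τ - 1) 0 ≤ modSmooth X τ := by
  obtain ⟨x, hx⟩ := exists_norm_eq X zero_le_one
  have h := le_modSmooth hτ rfl hx.le
  have hplus : x + τ • x = (1 + τ) • x := by rw [add_smul, one_smul]
  have hminus : x - τ • x = (1 - τ) • x := by rw [sub_smul, one_smul]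
  rw [hplus, hminus, norm_smul, norm_smul, hx, Real.norm_of_nonneg (by linarith),
    Real.norm_eq_abs] at h
  rcases le_total τ 1 with h₁ | h₁
  · rw [abs_of_nonneg (by linarith)] at h
    rw [max_eq_right (by linarith)]
    linarith
  · rw [abs_of_nonpos (by linarith)] at h
    rw [max_eq_left (by linarith)]
    linarith

theorem modSmooth_nonneg [Nontrivial X] {τ : ℝ} (hτ : 0 ≤ τ) : 0 ≤ modSmooth X τ :=
  (le_max_right _ _).trans (max_sub_one_le_modSmooth hτ)

theorem le_two_of_modSmooth_le_one [Nontrivial X] {τ : ℝ} (hτ : 0 ≤ τ) (h : modSmooth X τ ≤ 1) :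
    τ ≤ 2 := by
  have := (le_max_left _ _).trans (max_sub_one_le_modSmooth (X := X) hτ)
  linarith

theorem modSmooth_le_div_mul {s t : ℝ} (hs : 0 ≤ s) (hst : s ≤ t) (ht : 0 < t) :
    modSmooth X s ≤ s / t * modSmooth X t := by
  set c := s / t
  have hc₀ : 0 ≤ c := div_nonneg hs ht.le
  have hc₁ : c ≤ 1 := (div_le_one ht).mpr hst
  have hconv : ∀ x y : X, ‖x + s • y‖ ≤ (1 - c) * ‖x‖ + c * ‖x + t • y‖ := fun x y => by
    have hxy : x + s • y = (1 - c) • x + c • (x + t • y) := by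
      rw [smul_add, smul_smul, div_mul_cancel₀ s ht.ne', ← add_assoc, ← add_smul, sub_add_cancel,
        one_smul]
    rw [hxy]
    refine (norm_add_le _ _).trans_eq ?_
    rw [norm_smul, norm_smul, Real.norm_of_nonneg (by linarith), Real.norm_of_nonneg hc₀]
  refine csSup_le ⟨-1, 0, 0, by simp⟩ fun r ⟨x, y, hxy, hy, hr⟩ => ?_
  have h₁ := hconv x y
  have h₂ := hconv x (-y)
  rw [smul_neg, ← sub_eq_add_neg, smul_neg, ← sub_eq_add_neg] at h₂
  have hρ := le_modSmooth ht.le hxy hy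
  have hx : (1 - c) * ‖x‖ ≤ 1 - c := mul_le_of_le_one_right (by linarith) (hxy ▸ hy)
  rw [hr]
  nlinarith

theorem norm_add_add_norm_sub_le_modSmooth {u : X} (hu : u ≠ 0) (v : X) :
    ‖u + v‖ + ‖u - v‖ ≤ 2 * ‖u‖ * (1 + modSmooth X (‖v‖ / ‖u‖)) := by
  have hu₀ : 0 < ‖u‖ := norm_pos_iff.mpr hu
  rcases eq_or_ne v 0 with rfl | hv
  · have : Nontrivial X := ⟨⟨u, 0, hu⟩⟩
    have := modSmooth_nonneg (X := X) (le_refl 0)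
    simp only [add_zero, sub_zero, norm_zero, zero_div]
    nlinarith
  have hv₀ : 0 < ‖v‖ := norm_pos_iff.mpr hv
  have hunit : ∀ w : X, w ≠ 0 → ‖‖w‖⁻¹ • w‖ = 1 := fun w hw => by
    rw [norm_smul, norm_inv, norm_norm, inv_mul_cancel₀ (norm_ne_zero_iff.mpr hw)]
  have h := le_modSmooth (x := ‖u‖⁻¹ • u) (y := ‖v‖⁻¹ • v) (div_nonneg hv₀.le hu₀.le)
    ((hunit u hu).trans (hunit v hv).symm) (hunit v hv).le
  have hscale : (‖v‖ / ‖u‖) • ‖v‖⁻¹ • v = ‖u‖⁻¹ • v := by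
    rw [smul_smul]
    congr 1
    field_simp
  rw [hscale, ← smul_add, ← smul_sub, norm_smul, norm_smul, Real.norm_of_nonneg (by positivity),
    ← mul_add, inv_mul_eq_div, div_div, div_sub_one (by positivity),
    div_le_iff₀ (by positivity)] at h
  linarith

theorem norm_add_le_of_norming {u v : X} (hu : u ≠ 0) {f : StrongDual ℝ X} (hf : ‖f‖ ≤ 1)
    (hfu : f u = ‖u‖) (hfv : f v ≤ 0) {τ : ℝ} (hτ : 0 < τ) (hvu : ‖v‖ ≤ τ * ‖u‖) :
    ‖u + v‖ ≤ ‖u‖ + 2 * ‖v‖ / τ * modSmooth X τ := by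
  have hu₀ : 0 < ‖u‖ := norm_pos_iff.mpr hu
  have hsub : ‖u‖ ≤ ‖u - v‖ := calc
    ‖u‖ ≤ f (u - v) := by rw [map_sub, hfu]; linarith
    _ ≤ ‖u - v‖ := (le_abs_self _).trans ((f.le_opNorm _).trans (mul_le_of_le_one_left
      (norm_nonneg _) hf))
  have hρ : 2 * ‖u‖ * modSmooth X (‖v‖ / ‖u‖) ≤ 2 * ‖v‖ / τ * modSmooth X τ := calc
    2 * ‖u‖ * modSmooth X (‖v‖ / ‖u‖) ≤ 2 * ‖u‖ * (‖v‖ / ‖u‖ / τ * modSmooth X τ) :=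
      mul_le_mul_of_nonneg_left
        (modSmooth_le_div_mul (by positivity) ((div_le_iff₀ hu₀).mpr hvu) hτ) (by positivity)
    _ = 2 * ‖v‖ / τ * modSmooth X τ := by field_simp
  have := norm_add_add_norm_sub_le_modSmooth hu v
  rw [mul_one_add] at this
  linarith

theorem norm_sub_le_diam_of_mem_convexHull {S : Set X} (hS : Bornology.IsBounded S) {a s : X}
    (ha : a ∈ convexHull ℝ S) (hs : s ∈ S) : ‖s - a‖ ≤ Metric.diam S := by
  obtain ⟨y, hyS, hy⟩ := convexHull_exists_dist_ge ha s
  rw [← dist_eq_norm, dist_comm]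
  exact hy.trans (Metric.dist_le_diam_of_mem hS hyS hs)

theorem exists_seq_norming_le {S : Set X} {a : X} (ha : a ∈ convexHull ℝ S) :
    ∃ x : ℕ → X, (∀ i, x i ∈ S) ∧ ∀ n, ∃ f : StrongDual ℝ X, ‖f‖ ≤ 1 ∧
      f (∑ i ∈ Finset.range n, (x i - a)) = ‖∑ i ∈ Finset.range n, (x i - a)‖ ∧ f (x n) ≤ f a := by
  choose g hg₁ hgσ using exists_dual_vector'' ℝ (E := X)
  choose next hnextS hnext using fun σ : X =>
    ((g σ).toLinearMap.concaveOn convex_univ).exists_le_of_mem_convexHull (Set.subset_univ S) ha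
  let σ : ℕ → X := fun n => Nat.rec 0 (fun _ s => s + (next s - a)) n
  have hσ : ∀ n, ∑ i ∈ Finset.range n, (next (σ i) - a) = σ n := fun n => by
    induction n with
    | zero => rfl
    | succ n ih => rw [Finset.sum_range_succ, ih]
  exact ⟨fun n => next (σ n), fun n => hnextS _, fun n =>
    ⟨g (σ n), hg₁ _, by rw [hσ, hgσ]; rfl, hnext _⟩⟩

theorem norm_sum_le_of_norming [Nontrivial X] {v : ℕ → X} {D : ℝ} (hv : ∀ i, ‖v i‖ ≤ D)
    (hnorming : ∀ n, ∃ f : StrongDual ℝ X, ‖f‖ ≤ 1 ∧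
      f (∑ i ∈ Finset.range n, v i) = ‖∑ i ∈ Finset.range n, v i‖ ∧ f (v n) ≤ 0)
    {τ : ℝ} (hτ : 0 < τ) (hρ : modSmooth X τ ≤ 1) (n : ℕ) :
    ‖∑ i ∈ Finset.range n, v i‖ ≤ (3 + 2 * n * modSmooth X τ) * D / τ := by
  have hD : 0 ≤ D := (norm_nonneg _).trans (hv 0)
  have hρ₀ := modSmooth_nonneg (X := X) hτ.le
  have hτ₂ := le_two_of_modSmooth_le_one hτ.le hρ
  induction n with
  | zero => simp only [Finset.range_zero, Finset.sum_empty, norm_zero]; positivity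
  | succ n ih =>
    rw [Finset.sum_range_succ, le_div_iff₀ hτ]
    set σ := ∑ i ∈ Finset.range n, v i
    push_cast
    by_cases hsmall : ‖σ‖ * τ ≤ D
    · have h₁ := mul_le_mul_of_nonneg_right (norm_add_le σ (v n)) hτ.le
      have h₂ : ‖v n‖ * τ ≤ D * 2 := mul_le_mul (hv n) hτ₂ hτ.le hD
      have h₃ : 0 ≤ 2 * ((n : ℝ) + 1) * modSmooth X τ * D := by positivity
      nlinarith
    · obtain ⟨f, hf₁, hfσ, hfv⟩ := hnorming n
      have hσ : σ ≠ 0 := fun h => hsmall (by simp [h, hD])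
      have hstep := norm_add_le_of_norming hσ hf₁ hfσ hfv hτ (by nlinarith [hv n])
      rw [le_div_iff₀ hτ] at ih
      have hcancel : 2 * ‖v n‖ / τ * modSmooth X τ * τ = 2 * ‖v n‖ * modSmooth X τ := by
        field_simp
      nlinarith [hv n]

end

theorem no_dim_caratheodory_general {X : Type*} [NormedAddCommGroup X] [NormedSpace ℝ X]
    (S : Set X) (hS : Bornology.IsBounded S) (a : X) (ha : a ∈ convexHull ℝ S) :
    ∃ x : ℕ → X, (∀ i, x i ∈ S) ∧
      ∀ k : ℕ, 1 ≤ k → ∀ τ : ℝ, 0 < τ → modSmooth X τ ≤ 1 / (k : ℝ) →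
        ‖a - (k : ℝ)⁻¹ • ∑ i ∈ Finset.range k, x i‖ ≤
          16 * Metric.diam S / ((k : ℝ) * τ) := by
  obtain ⟨x, hxS, hnorming⟩ := exists_seq_norming_le ha
  refine ⟨x, hxS, fun k hk τ hτ hρ => ?_⟩
  have hk₀ : (0 : ℝ) < k := by exact_mod_cast hk
  have hD := Metric.diam_nonneg (s := S)
  rcases subsingleton_or_nontrivial X with _ | _
  · rw [Subsingleton.elim (a - _) 0, norm_zero]
    positivity
  have hsum := norm_sum_le_of_norming (fun i => norm_sub_le_diam_of_mem_convexHull hS ha (hxS i))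
    (fun n => (hnorming n).imp fun f ⟨hf₁, hfσ, hfx⟩ => ⟨hf₁, hfσ, by rwa [map_sub, sub_nonpos]⟩)
    hτ (hρ.trans (div_le_one_of_le₀ (by exact_mod_cast hk) hk₀.le)) k
  have hkρ : k * modSmooth X τ ≤ 1 := by rwa [le_div_iff₀ hk₀, mul_comm] at hρ
  have hmean : a - (k : ℝ)⁻¹ • ∑ i ∈ Finset.range k, x i =
      -((k : ℝ)⁻¹ • ∑ i ∈ Finset.range k, (x i - a)) := by
    rw [Finset.sum_sub_distrib, Finset.sum_const, Finset.card_range, smul_sub,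
      ← Nat.cast_smul_eq_nsmul ℝ, smul_smul, inv_mul_cancel₀ hk₀.ne', one_smul, neg_sub]
  have hcancel : (k : ℝ) * (16 * Metric.diam S / (k * τ)) = 16 * Metric.diam S / τ := by
    field_simp
  rw [hmean, norm_neg, norm_smul, Real.norm_of_nonneg (by positivity), inv_mul_le_iff₀ hk₀,
    hcancel, le_div_iff₀ hτ]
  rw [le_div_iff₀ hτ] at hsum
  nlinarith

/-- No-dimension Carathéodory theorem in uniformly smooth Banach spaces (with the
absolute constant `C = 16`): for a bounded set `S` and `a ∈ conv S` there is a sequence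
of points of `S` whose running averages `a_k` satisfy
`‖a − a_k‖ ≤ 16 · diam S / (k · τ)` whenever `ρ_X(τ) ≤ 1/k`. -/
theorem no_dim_caratheodory {X : Type*} [NormedAddCommGroup X] [NormedSpace ℝ X]
    [CompleteSpace X]
    (hus : (fun t => modSmooth X t) =o[𝓝[>] (0 : ℝ)] fun t => t)
    (S : Set X) (hS : Bornology.IsBounded S) (a : X) (ha : a ∈ convexHull ℝ S) :
    ∃ x : ℕ → X, (∀ i, x i ∈ S) ∧
      ∀ k : ℕ, 1 ≤ k → ∀ τ : ℝ, 0 < τ → modSmooth X τ ≤ 1 / (k : ℝ) →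
        ‖a - (k : ℝ)⁻¹ • ∑ i ∈ Finset.range k, x i‖ ≤
          16 * Metric.diam S / ((k : ℝ) * τ) :=
  no_dim_caratheodory_general S hS a ha
end

section
/- Let X be a real Banach space with modulus of smoothness ρ_X, let u ∈ X be a unit vector, let f be a continuous linear functional on X with ‖f‖ = 1 and f(u) = 1, and let x ∈ X satisfy f(x) ≤ 0. Then ‖u + x‖ ≤ 2·ρ_X(‖x‖) + 1. -/
lemma modSmooth_bddAbove (X : Type*) [NormedAddCommGroup X] [NormedSpace ℝ X]
    {τ : ℝ} (hτ : 0 ≤ τ) :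
    BddAbove {r : ℝ | ∃ x y : X, ‖x‖ = ‖y‖ ∧ ‖y‖ ≤ 1 ∧
      r = (‖x + τ • y‖ + ‖x - τ • y‖) / 2 - 1} := by
  refine ⟨τ, ?_⟩
  rintro r ⟨a, b, hab, hb, rfl⟩
  have h1 : ‖a + τ • b‖ ≤ 1 + τ := by
    calc ‖a + τ • b‖ ≤ ‖a‖ + ‖τ • b‖ := norm_add_le _ _
    _ ≤ 1 + τ := by
        rw [norm_smul, Real.norm_of_nonneg hτ]
        have : ‖a‖ ≤ 1 := hab ▸ hb
        nlinarith
  have h2 : ‖a - τ • b‖ ≤ 1 + τ := by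
    calc ‖a - τ • b‖ ≤ ‖a‖ + ‖τ • b‖ := norm_sub_le _ _
    _ ≤ 1 + τ := by
        rw [norm_smul, Real.norm_of_nonneg hτ]
        have : ‖a‖ ≤ 1 := hab ▸ hb
        nlinarith
  linarith

/-- Supporting-hyperplane lemma: if `u` is a unit vector, `f` a norming functional of `u`,
and `f x ≤ 0`, then `‖u + x‖ ≤ 2 ρ_X(‖x‖) + 1`. -/
theorem norm_add_le_of_norming_functional {X : Type*} [NormedAddCommGroup X]
    [NormedSpace ℝ X] [CompleteSpace X]
    (u : X) (hu : ‖u‖ = 1) (f : X →L[ℝ] ℝ) (hf : ‖f‖ = 1) (hfu : f u = 1)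
    (x : X) (hx : f x ≤ 0) :
    ‖u + x‖ ≤ 2 * modSmooth X ‖x‖ + 1 := by
  have hbdd := modSmooth_bddAbove X (norm_nonneg x)
  rcases eq_or_ne x 0 with rfl | hx0
  · have hmem : (0 : ℝ) ∈ {r : ℝ | ∃ a b : X, ‖a‖ = ‖b‖ ∧ ‖b‖ ≤ 1 ∧
        r = (‖a + ‖(0:X)‖ • b‖ + ‖a - ‖(0:X)‖ • b‖) / 2 - 1} := by
      refine ⟨u, u, rfl, hu.le, ?_⟩
      simp [hu]
    have := le_csSup hbdd hmem
    simp only [add_zero, hu]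
    unfold modSmooth
    linarith
  · set τ := ‖x‖ with hτ
    have hτ0 : 0 < τ := norm_pos_iff.mpr hx0
    have hmem : ((‖u + x‖ + ‖u - x‖) / 2 - 1) ∈ {r : ℝ | ∃ a b : X, ‖a‖ = ‖b‖ ∧ ‖b‖ ≤ 1 ∧
        r = (‖a + τ • b‖ + ‖a - τ • b‖) / 2 - 1} := by
      refine ⟨u, τ⁻¹ • x, ?_, ?_, ?_⟩
      · rw [norm_smul, Real.norm_of_nonneg (inv_nonneg.mpr hτ0.le), inv_mul_cancel₀ hτ0.ne',
          hu]
      · rw [norm_smul, Real.norm_of_nonneg (inv_nonneg.mpr hτ0.le), inv_mul_cancel₀ hτ0.ne']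
      · rw [smul_smul, mul_inv_cancel₀ hτ0.ne', one_smul]
    have hsup : (‖u + x‖ + ‖u - x‖) / 2 - 1 ≤ modSmooth X τ := le_csSup hbdd hmem
    have hlow : (1 : ℝ) ≤ ‖u - x‖ := by
      have h1 : f (u - x) ≤ ‖f‖ * ‖u - x‖ := le_trans (le_abs_self _) (f.le_opNorm _)
      rw [map_sub, hfu, hf, one_mul] at h1
      linarith
    linarith
end

section
/- Let S be a subset of the closed unit ball of a real inner product (Euclidean/Hilbert) space H such that 0 ∈ conv S. Then there exists a sequence x_1, x_2, … of points of S such that ‖∑_{i=1}^k x_i‖ ≤ √k for every integer k ≥ 1. -/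
/-!
Choose the points greedily: since `0 ∈ conv S`, no open half-space through the origin contains
`S`, so for the current partial sum `v` there is `s ∈ S` with `⟪s, v⟫ ≤ 0`. Then
`‖v + s‖² = ‖v‖² + 2⟪s, v⟫ + ‖s‖² ≤ ‖v‖² + 1`, and by induction `‖∑_{i<k} x_i‖² ≤ k`.
-/

open Finset RealInnerProductSpace

theorem exists_mem_map_nonpos_of_zero_mem_convexHull {𝕜 E : Type*} [Field 𝕜] [LinearOrder 𝕜]
    [IsStrictOrderedRing 𝕜] [AddCommGroup E] [Module 𝕜 E] (f : E →ₗ[𝕜] 𝕜) {S : Set E}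
    (h0 : (0 : E) ∈ convexHull 𝕜 S) : ∃ s ∈ S, f s ≤ 0 := by
  simpa using (f.concaveOn convex_univ).exists_le_of_mem_convexHull (Set.subset_univ S) h0

theorem exists_seq_forall_sum_range {M : Type*} [AddCommMonoid M] (P : M → M → Prop)
    (hP : ∀ v, ∃ s, P v s) : ∃ x : ℕ → M, ∀ k, P (∑ i ∈ range k, x i) (x k) := by
  choose step hstep using hP
  let partialSum : ℕ → M := fun n => Nat.rec 0 (fun _ v => v + step v) n
  have hsum : ∀ k, ∑ i ∈ range k, step (partialSum i) = partialSum k := by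
    intro k
    induction k with
    | zero => rfl
    | succ n ih => rw [sum_range_succ, ih]
  exact ⟨fun n => step (partialSum n), fun k => by rw [hsum]; exact hstep _⟩

theorem norm_sum_range_sq_le {H : Type*} [NormedAddCommGroup H] [InnerProductSpace ℝ H]
    {x : ℕ → H} (hx : ∀ k, ‖x k‖ ≤ 1) (hinner : ∀ k, ⟪x k, ∑ i ∈ range k, x i⟫ ≤ 0) (k : ℕ) :
    ‖∑ i ∈ range k, x i‖ ^ 2 ≤ k := by
  induction k with
  | zero => simp
  | succ n ih =>
    have hxn : ‖x n‖ ^ 2 ≤ 1 := pow_le_one₀ (norm_nonneg _) (hx n)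
    calc ‖∑ i ∈ range (n + 1), x i‖ ^ 2
        = ‖∑ i ∈ range n, x i‖ ^ 2 + 2 * ⟪x n, ∑ i ∈ range n, x i⟫ + ‖x n‖ ^ 2 := by
          rw [sum_range_succ, norm_add_sq_real, real_inner_comm (x n)]
      _ ≤ (n : ℝ) + 1 := by linarith [hinner n]
      _ = (n + 1 : ℕ) := by push_cast; ring

/-- Folklore Euclidean analogue of the no-dimension Carathéodory theorem: if `S` lies in
the closed unit ball of a real inner product space and `0 ∈ conv S`, then there is a
sequence of points of `S` all of whose partial sums satisfy `‖∑_{i=1}^k x_i‖ ≤ √k`. -/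
theorem partial_sums_le_sqrt {H : Type*} [NormedAddCommGroup H] [InnerProductSpace ℝ H]
    (S : Set H) (hS : S ⊆ Metric.closedBall 0 1) (h0 : (0 : H) ∈ convexHull ℝ S) :
    ∃ x : ℕ → H, (∀ i, x i ∈ S) ∧
      ∀ k : ℕ, 1 ≤ k → ‖∑ i ∈ Finset.range k, x i‖ ≤ Real.sqrt k := by
  have hstep : ∀ v, ∃ s, s ∈ S ∧ ⟪s, v⟫ ≤ 0 := fun v => by
    simpa only [innerₗ_apply_apply, real_inner_comm v] using
      exists_mem_map_nonpos_of_zero_mem_convexHull (innerₗ H v) h0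
  obtain ⟨x, hx⟩ := exists_seq_forall_sum_range _ hstep
  have hnorm : ∀ k, ‖x k‖ ≤ 1 := fun k => mem_closedBall_zero_iff.mp (hS (hx k).1)
  refine ⟨x, fun i => (hx i).1, fun k _ => Real.le_sqrt_of_sq_le ?_⟩
  exact norm_sum_range_sq_le hnorm (fun k => (hx k).2) k
end

section
/- Fix 1 ≤ p ≤ 2 and an integer k ≥ 1, and set n = 2k. In the space ℓ_p^n (i.e. ℝ^n with the norm ‖x‖_p = (∑_{i=1}^n |x_i|^p)^{1/p}), let S = {e_1, …, e_n} be the set of standard basis vectors and let a = (1/n, …, 1/n). Then a ∈ conv S and dist(a, conv_k S) ≥ (1/4)·k^{1/p − 1}, where the distance is taken in the ℓ_p norm. -/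
/-!
A point of `conv_k S` is a convex combination of at most `k` basis vectors, so it vanishes on
at least `n - k = k` coordinates. On each of those, `a - x` equals `1 / (2k)`, and `k` such
coordinates already force `‖a - x‖_p ≥ k^{1/p} / (2k) = k^{1/p - 1} / 2`.
-/

open scoped ENNReal

def convHullK {X : Type*} [NormedAddCommGroup X] [NormedSpace ℝ X] (k : ℕ) (S : Set X) :
    Set X :=
  ⋃ (F : Finset X) (_ : ↑F ⊆ S) (_ : F.card ≤ k), convexHull ℝ (F : Set X)

open Finset Set WithLp

namespace Module.Basis

variable {ι X : Type*}

theorem coord_eq_zero_of_mem_convexHull_image [AddCommGroup X] [Module ℝ X]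
    (b : Basis ι ℝ X) {T : Set ι} {x : X} (hx : x ∈ convexHull ℝ (b '' T)) {i : ι}
    (hi : i ∉ T) : b.coord i x = 0 := by
  refine convexHull_min ?_ (LinearMap.ker (b.coord i)).convex hx
  rintro _ ⟨j, hj, rfl⟩
  simp [show j ≠ i by rintro rfl; exact hi hj]

theorem exists_card_le_coord_eq_zero_of_mem_convHullK [NormedAddCommGroup X] [NormedSpace ℝ X]
    (b : Basis ι ℝ X) {k : ℕ} {x : X} (hx : x ∈ convHullK k (range b)) :
    ∃ T : Finset ι, #T ≤ k ∧ ∀ i ∉ T, b.coord i x = 0 := by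
  classical
  simp only [convHullK, mem_iUnion] at hx
  obtain ⟨F, hFb, hFk, hxF⟩ := hx
  refine ⟨F.preimage b b.injective.injOn,
    (card_preimage _ _ _).trans_le ((card_filter_le _ _).trans hFk),
    fun i hi => b.coord_eq_zero_of_mem_convexHull_image (convexHull_mono ?_ hxF) hi⟩
  intro y hy
  obtain ⟨j, rfl⟩ := hFb hy
  exact ⟨j, by simpa using hy, rfl⟩

end Module.Basis

theorem subset_convHullK {X : Type*} [NormedAddCommGroup X] [NormedSpace ℝ X] {k : ℕ}
    (hk : 1 ≤ k) (S : Set X) : S ⊆ convHullK k S := by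
  intro x hx
  simp only [convHullK, mem_iUnion]
  exact ⟨{x}, by simpa using hx, by simpa using hk, subset_convexHull ℝ _ (by simp)⟩

namespace PiLp

variable {ι : Type*} [Fintype ι]

theorem card_rpow_mul_le_norm {p : ℝ≥0∞} [Fact (1 ≤ p)] {β : ι → Type*}
    [∀ i, SeminormedAddCommGroup (β i)] (x : PiLp p β) {s : Finset ι} (hs : s.Nonempty)
    {c : ℝ} (hc : 0 ≤ c) (h : ∀ i ∈ s, c ≤ ‖x i‖) : (#s : ℝ) ^ (1 / p.toReal) * c ≤ ‖x‖ := by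
  rcases eq_or_ne p ∞ with rfl | hp_top
  · obtain ⟨i, hi⟩ := hs
    simpa using (h i hi).trans (norm_apply_le x i)
  have hp : 0 < p.toReal :=
    ENNReal.toReal_pos (zero_lt_one.trans_le Fact.out).ne' hp_top
  have hsum : #s * c ^ p.toReal ≤ ∑ i, ‖x i‖ ^ p.toReal := calc
    #s * c ^ p.toReal = ∑ i ∈ s, c ^ p.toReal := by simp
    _ ≤ ∑ i ∈ s, ‖x i‖ ^ p.toReal :=
      sum_le_sum fun i hi => Real.rpow_le_rpow hc (h i hi) hp.le
    _ ≤ ∑ i, ‖x i‖ ^ p.toReal :=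
      sum_le_sum_of_subset_of_nonneg (subset_univ s) fun _ _ _ => by positivity
  calc (#s : ℝ) ^ (1 / p.toReal) * c = (#s * c ^ p.toReal) ^ (1 / p.toReal) := by
        rw [Real.mul_rpow (by positivity) (by positivity), ← Real.rpow_mul hc,
          mul_one_div_cancel hp.ne', Real.rpow_one]
    _ ≤ ‖x‖ := by
      rw [norm_eq_sum hp]
      gcongr

theorem toLp_const_mem_convexHull_range_basisFun [Nonempty ι] (p : ℝ≥0∞) :
    toLp p (fun _ : ι => 1 / (Fintype.card ι : ℝ)) ∈ convexHull ℝ (range (basisFun p ℝ ι)) := by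
  rw [← (basisFun p ℝ ι).sum_repr (toLp p _)]
  refine (convex_convexHull ℝ _).sum_mem (fun _ _ => by simp) ?_
    fun i _ => subset_convexHull ℝ _ ⟨i, rfl⟩
  simp

end PiLp

theorem lp_lower_bound_general (p : ℝ≥0∞) [Fact (1 ≤ p)] (k : ℕ) (hk : 1 ≤ k) :
    ∀ (S : Set (PiLp p (fun _ : Fin (2 * k) => ℝ)))
      (a : PiLp p (fun _ : Fin (2 * k) => ℝ)),
      S = {x | ∃ i : Fin (2 * k), x = (WithLp.equiv p (∀ _ : Fin (2 * k), ℝ)).symm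
              (Pi.single i 1)} →
      a = (WithLp.equiv p (∀ _ : Fin (2 * k), ℝ)).symm (fun _ => 1 / (2 * k : ℝ)) →
      a ∈ convexHull ℝ S ∧
        (1 / 4 : ℝ) * (k : ℝ) ^ (1 / p.toReal - 1) ≤ Metric.infDist a (convHullK k S) := by
  intro S a hS ha
  set b := PiLp.basisFun p ℝ (Fin (2 * k))
  obtain rfl : S = range b := by ext; simp [hS, b, eq_comm]
  have hk0 : (0 : ℝ) < k := by exact_mod_cast hk
  have : Nonempty (Fin (2 * k)) := ⟨⟨0, by omega⟩⟩
  refine ⟨by simpa [ha] using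
    PiLp.toLp_const_mem_convexHull_range_basisFun (ι := Fin (2 * k)) p, ?_⟩
  have hne : (convHullK k (range b)).Nonempty := (range_nonempty b).mono (subset_convHullK hk _)
  refine (Metric.le_infDist hne).2 fun x hx => ?_
  obtain ⟨T, hTk, hxT⟩ := b.exists_card_le_coord_eq_zero_of_mem_convHullK hx
  have hTc : k ≤ #Tᶜ := by rw [card_compl, Fintype.card_fin]; omega
  have hax : ∀ i ∈ Tᶜ, 1 / (2 * k : ℝ) ≤ ‖(a - x) i‖ := by
    intro i hi
    have hxi : x i = 0 := hxT i (mem_compl.1 hi)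
    simp [ha, hxi]
  calc (1 / 4 : ℝ) * (k : ℝ) ^ (1 / p.toReal - 1)
        ≤ (k : ℝ) ^ (1 / p.toReal) * (1 / (2 * k)) := by
        rw [Real.rpow_sub_one hk0.ne']
        field_simp
        nlinarith [Real.rpow_nonneg hk0.le (1 / p.toReal)]
    _ ≤ (#Tᶜ : ℝ) ^ (1 / p.toReal) * (1 / (2 * k)) := by gcongr
    _ ≤ ‖a - x‖ := PiLp.card_rpow_mul_le_norm _ (card_pos.1 (hk.trans hTc)) (by positivity) hax
    _ = dist a x := (dist_eq_norm a x).symm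

/-- Tightness of the no-dimension Carathéodory bound in `ℓ_p^{2k}` for `1 ≤ p ≤ 2`:
for the standard basis vectors `S = {e_1, …, e_n}` (`n = 2k`) and the centroid
`a = (1/n, …, 1/n)`, one has `a ∈ conv S` and `dist(a, conv_k S) ≥ (1/4) k^{1/p − 1}`. -/
theorem lp_lower_bound (p : ℝ≥0∞) [Fact (1 ≤ p)] (hp2 : p ≤ 2) (k : ℕ) (hk : 1 ≤ k) :
    ∀ (S : Set (PiLp p (fun _ : Fin (2 * k) => ℝ)))
      (a : PiLp p (fun _ : Fin (2 * k) => ℝ)),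
      S = {x | ∃ i : Fin (2 * k), x = (WithLp.equiv p (∀ _ : Fin (2 * k), ℝ)).symm
              (Pi.single i 1)} →
      a = (WithLp.equiv p (∀ _ : Fin (2 * k), ℝ)).symm (fun _ => 1 / (2 * k : ℝ)) →
      a ∈ convexHull ℝ S ∧
        (1 / 4 : ℝ) * (k : ℝ) ^ (1 / p.toReal - 1) ≤ Metric.infDist a (convHullK k S) :=
  lp_lower_bound_general p k hk
end

section
/- The space ℓ¹ (real summable sequences with the norm ‖x‖₁ = ∑|x_i|) does not have Carathéodory's approximation property: for every integer k ≥ 1 there exist a finite subset S of the closed unit ball of ℓ¹ and a point a ∈ conv S such that dist(a, conv_k S) ≥ 1/4. In particular, there is no function f : ℕ → [0, ∞) with f(k) → 0 such that h⁺(conv S, conv_k S) ≤ f(k) for every subset S of the unit ball of ℓ¹. -/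
/-!
Let `a` be the centroid of the basis vectors `e₀, …, e₂ₖ₋₁` of `ℓ¹`. A convex combination of at
most `k` of them vanishes on at least `k` of these coordinates, where `a` equals `1 / (2k)`, so its
`ℓ¹`-distance to `a` is at least `1 / 2`. Hence no bound `f k → 0` is possible.
-/

open scoped ENNReal

open Metric Finset

theorem mem_convHullK_of_mem {X : Type*} [NormedAddCommGroup X] [NormedSpace ℝ X] {k : ℕ}
    {S : Set X} {x : X} (hk : 1 ≤ k) (hx : x ∈ S) : x ∈ convHullK k S := by
  simp only [convHullK, Set.mem_iUnion]
  exact ⟨{x}, by simpa using hx, by simpa using hk, subset_convexHull ℝ _ (by simp)⟩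

namespace lp

variable {α : Type*} {E : α → Type*} [∀ i, NormedAddCommGroup (E i)]
  [∀ i, NormedSpace ℝ (E i)] {p : ℝ≥0∞}

theorem apply_eq_zero_of_mem_convexHull {s : Set (lp E p)} {j : α} (hs : ∀ y ∈ s, y j = 0)
    {x : lp E p} (hx : x ∈ convexHull ℝ s) : x j = 0 :=
  convexHull_min (t := (LinearMap.ker (evalₗ (𝕜 := ℝ) E p j) : Set (lp E p))) hs
    (Submodule.convex _) hx

end lp

variable {ι : Type*} [DecidableEq ι]

noncomputable def ell1Basis (i : ι) : lp (fun _ : ι => ℝ) 1 := lp.single 1 i 1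

theorem ell1Basis_apply (i j : ι) : ell1Basis i j = if j = i then 1 else 0 := by
  simp [ell1Basis, Pi.single_apply]

theorem norm_ell1Basis (i : ι) : ‖ell1Basis i‖ = 1 := by
  simp [ell1Basis, lp.norm_single]

theorem ell1Basis_injective : Function.Injective (ell1Basis (ι := ι)) := by
  intro i j h
  simpa [ell1Basis_apply] using congr($h i)

theorem centerMass_ell1Basis_apply (s : Finset ι) (j : ι) :
    s.centerMass (fun _ => (1 : ℝ)) ell1Basis j = if j ∈ s then (#s : ℝ)⁻¹ else 0 := by
  have hsum : ⇑(s.centerMass (fun _ => (1 : ℝ)) ell1Basis) =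
      (#s : ℝ)⁻¹ • ∑ i ∈ s, (ell1Basis i : ι → ℝ) := by
    simp only [centerMass, one_smul, sum_const, nsmul_eq_mul, mul_one,
      lp.coeFn_smul, lp.coeFn_sum]
  rw [hsum]
  by_cases hj : j ∈ s <;> simp [Finset.sum_apply, ell1Basis_apply, hj]

theorem exists_support_of_mem_convHullK_ell1Basis {k : ℕ} {s : Set ι}
    {x : lp (fun _ : ι => ℝ) 1} (hx : x ∈ convHullK k (ell1Basis '' s)) :
    ∃ T : Finset ι, #T ≤ k ∧ ∀ j ∉ T, x j = 0 := by
  simp only [convHullK, Set.mem_iUnion] at hx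
  obtain ⟨F, hFs, hFk, hxF⟩ := hx
  refine ⟨F.preimage ell1Basis ell1Basis_injective.injOn, ?_, fun j hj => ?_⟩
  · exact (card_le_card_of_injOn ell1Basis (fun i hi => by simpa using hi)
      ell1Basis_injective.injOn).trans hFk
  · refine lp.apply_eq_zero_of_mem_convexHull (fun y hy => ?_) hxF
    obtain ⟨i, -, rfl⟩ := hFs hy
    have : j ≠ i := by rintro rfl; exact hj (by simpa using hy)
    simp [ell1Basis_apply, this]

theorem card_sub_card_div_le_dist_centerMass_ell1Basis (s T : Finset ι)
    {x : lp (fun _ : ι => ℝ) 1} (hx : ∀ j ∉ T, x j = 0) :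
    ((#s : ℝ) - #T) / #s ≤ dist (s.centerMass (fun _ => (1 : ℝ)) ell1Basis) x := by
  set a := s.centerMass (fun _ => (1 : ℝ)) ell1Basis
  have hcoord : ∀ j ∈ s \ T, ‖(a - x) j‖ = (#s : ℝ)⁻¹ := by
    intro j hj
    rw [mem_sdiff] at hj
    simp [a, centerMass_ell1Basis_apply, hj.1, hx j hj.2]
  have hcard : (#s : ℝ) - #T ≤ #(s \ T) := by
    have := card_le_card_sdiff_add_card (s := s) (t := T)
    rw [sub_le_iff_le_add]
    exact_mod_cast this
  calc ((#s : ℝ) - #T) / #s ≤ #(s \ T) * (#s : ℝ)⁻¹ := by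
        rw [div_eq_mul_inv]; gcongr
    _ = ∑ j ∈ s \ T, ‖(a - x) j‖ := by
        rw [sum_congr rfl hcoord, sum_const, nsmul_eq_mul]
    _ ≤ ‖a - x‖ := by
        simpa using lp.sum_rpow_le_norm_rpow (p := 1) (by simp) (a - x) (s \ T)
    _ = dist a x := (dist_eq_norm a x).symm

theorem card_sub_div_card_le_infDist_centerMass_ell1Basis {s : Finset ι} (hs : s.Nonempty)
    {k : ℕ} (hk : 1 ≤ k) :
    ((#s : ℝ) - k) / #s ≤
      infDist (s.centerMass (fun _ => (1 : ℝ)) ell1Basis) (convHullK k (ell1Basis '' s)) := by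
  obtain ⟨i, hi⟩ := hs
  rw [le_infDist ⟨_, mem_convHullK_of_mem hk (Set.mem_image_of_mem _ hi)⟩]
  intro x hx
  obtain ⟨T, hTk, hxT⟩ := exists_support_of_mem_convHullK_ell1Basis hx
  refine le_trans ?_ (card_sub_card_div_le_dist_centerMass_ell1Basis s T hxT)
  gcongr

/-- `ℓ¹` fails Carathéodory's approximation property: for every `k ≥ 1` there is a finite
subset `S` of the unit ball of `ℓ¹` and `a ∈ conv S` with `dist(a, conv_k S) ≥ 1/4`; in
particular no function `f : ℕ → [0, ∞)` tending to `0` can bound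
`h⁺(conv S, conv_k S) ≤ f k` for all subsets `S` of the unit ball. -/
theorem l1_no_caratheodory_approximation :
    (∀ k : ℕ, 1 ≤ k →
      ∃ S : Set (lp (fun _ : ℕ => ℝ) 1), S.Finite ∧ S ⊆ Metric.closedBall 0 1 ∧
        ∃ a ∈ convexHull ℝ S, (1 / 4 : ℝ) ≤ Metric.infDist a (convHullK k S)) ∧
    ¬ ∃ f : ℕ → ℝ, (∀ k, 0 ≤ f k) ∧ Filter.Tendsto f Filter.atTop (nhds 0) ∧
        ∀ S : Set (lp (fun _ : ℕ => ℝ) 1), S ⊆ Metric.closedBall 0 1 →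
          ∀ k : ℕ, 1 ≤ k → ∀ a ∈ convexHull ℝ S,
            Metric.infDist a (convHullK k S) ≤ f k := by
  have witness (k : ℕ) (hk : 1 ≤ k) :
      ∃ S : Set (lp (fun _ : ℕ => ℝ) 1), S.Finite ∧ S ⊆ closedBall 0 1 ∧
        ∃ a ∈ convexHull ℝ S, (1 / 4 : ℝ) ≤ infDist a (convHullK k S) := by
    let s := range (2 * k)
    have hs : s.Nonempty := nonempty_range_iff.mpr (by omega)
    refine ⟨ell1Basis '' s, s.finite_toSet.image _, ?_, _,
      centerMass_mem_convexHull _ (fun _ _ => zero_le_one) (by simpa using hs)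
        (fun i hi => Set.mem_image_of_mem _ hi), ?_⟩
    · rintro - ⟨i, -, rfl⟩
      simp [norm_ell1Basis]
    · refine le_trans ?_ (card_sub_div_card_le_infDist_centerMass_ell1Basis hs hk)
      have : (0 : ℝ) < k := by exact_mod_cast hk
      rw [card_range, le_div_iff₀ (by positivity)]
      push_cast
      linarith
  refine ⟨witness, ?_⟩
  rintro ⟨f, -, hf, hbound⟩
  obtain ⟨N, hN⟩ :=
    (hf.eventually (gt_mem_nhds (by norm_num : (0 : ℝ) < 1 / 4))).exists_forall_of_atTop
  obtain ⟨S, -, hS, a, ha, hdist⟩ := witness (N + 1) (by omega)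
  linarith [hN (N + 1) (by omega), hbound S hS (N + 1) (by omega) a ha]
end

section
/- For every real p with 2 ≤ p < ∞ and every t with 0 < t ≤ 1, one has ( ((1 + t)^p + (1 − t)^p)/2 )^{1/p} − 1 < ((p − 1)/2)·t². -/
/-!
Write `A_r(s) = (1 + s)^r + (1 - s)^r` and `B_r(s) = (1 + s)^r - (1 - s)^r`, so that
`A_r' = r B_{r-1}` and `B_r' = r A_{r-1}`. Raising to the `p`-th power, the claim becomes
`A_p(t) < 2 (1 + (p-1)/2 t²)^p`. Both sides agree at `t = 0`, so comparing derivatives reduces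
this to `B_{p-1}(s) < 2 (p-1) s (1 + (p-1)/2 s²)^{p-1}`, and differentiating once more reduces that to
`A_{p-2}(s) ≤ 2 (1 + (p-2)/2 s²)^{p-2}`. This last bound holds for every exponent `r ≥ 0`: the same
two reductions lower `r` by `2`, and for `0 ≤ r ≤ 2` it follows from concavity of `x ↦ x^r` or
`x ↦ x^{r/2}`.
-/

open Real Set

theorem lt_of_hasDerivAt_of_pos {f f' : ℝ → ℝ} {a b : ℝ} (hf : ∀ x, HasDerivAt f (f' x) x)
    (hf' : ∀ x ∈ Ioo a b, 0 < f' x) (hab : a < b) : f a < f b :=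
  strictMonoOn_of_hasDerivWithinAt_pos (convex_Icc a b)
    (continuous_iff_continuousAt.2 fun x => (hf x).continuousAt).continuousOn
    (fun x _ => (hf x).hasDerivWithinAt)
    (by simpa only [interior_Icc] using hf') (left_mem_Icc.2 hab.le) (right_mem_Icc.2 hab.le) hab

theorem rpow_add_rpow_le_two_mul_add_div_two_rpow {q x y : ℝ} (hq₀ : 0 ≤ q) (hq₁ : q ≤ 1)
    (hx : 0 ≤ x) (hy : 0 ≤ y) : x ^ q + y ^ q ≤ 2 * ((x + y) / 2) ^ q := by
  have h := (concaveOn_rpow hq₀ hq₁).2 (mem_Ici.2 hx) (mem_Ici.2 hy)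
    (by norm_num : (0 : ℝ) ≤ 1 / 2) (by norm_num : (0 : ℝ) ≤ 1 / 2) (by norm_num)
  simp only [smul_eq_mul] at h
  rw [show (x + y) / 2 = 1 / 2 * x + 1 / 2 * y by ring]
  linarith

theorem hasDerivAt_one_add_rpow_add_one_sub_rpow {r : ℝ} (hr : 1 ≤ r) (x : ℝ) :
    HasDerivAt (fun s => (1 + s) ^ r + (1 - s) ^ r)
      (r * ((1 + x) ^ (r - 1) - (1 - x) ^ (r - 1))) x := by
  have h₁ := ((hasDerivAt_id x).const_add 1).rpow_const (p := r) (Or.inr hr)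
  have h₂ := ((hasDerivAt_id x).const_sub 1).rpow_const (p := r) (Or.inr hr)
  exact (h₁.add h₂).congr_deriv (by simp only [id]; ring)

theorem hasDerivAt_one_add_rpow_sub_one_sub_rpow {r : ℝ} (hr : 1 ≤ r) (x : ℝ) :
    HasDerivAt (fun s => (1 + s) ^ r - (1 - s) ^ r)
      (r * ((1 + x) ^ (r - 1) + (1 - x) ^ (r - 1))) x := by
  have h₁ := ((hasDerivAt_id x).const_add 1).rpow_const (p := r) (Or.inr hr)
  have h₂ := ((hasDerivAt_id x).const_sub 1).rpow_const (p := r) (Or.inr hr)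
  exact (h₁.sub h₂).congr_deriv (by simp only [id]; ring)

theorem hasDerivAt_one_add_mul_sq_rpow {r : ℝ} (hr : 1 ≤ r) (c x : ℝ) :
    HasDerivAt (fun s => (1 + c * s ^ 2) ^ r) (2 * c * r * x * (1 + c * x ^ 2) ^ (r - 1)) x := by
  have h := (((hasDerivAt_pow 2 x).const_mul c).const_add 1).rpow_const (p := r) (Or.inr hr)
  exact h.congr_deriv (by push_cast; ring)

theorem one_add_rpow_add_one_sub_rpow_le_of_le_two {r s : ℝ} (hr₀ : 0 ≤ r) (hr₂ : r ≤ 2)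
    (hs₀ : 0 ≤ s) (hs₁ : s ≤ 1) :
    (1 + s) ^ r + (1 - s) ^ r ≤ 2 * (1 + r / 2 * s ^ 2) ^ r := by
  have hM : 1 ≤ 1 + r / 2 * s ^ 2 := by nlinarith
  rcases le_total r 1 with hr₁ | hr₁
  · calc (1 + s) ^ r + (1 - s) ^ r ≤ 2 * ((1 + s + (1 - s)) / 2) ^ r :=
          rpow_add_rpow_le_two_mul_add_div_two_rpow hr₀ hr₁ (by linarith) (by linarith)
      _ = 2 * 1 := by norm_num
      _ ≤ 2 * (1 + r / 2 * s ^ 2) ^ r := by gcongr; exact one_le_rpow hM hr₀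
  · -- the squares `(1 ± s) ^ 2` have mean `1 + s ^ 2`
    calc (1 + s) ^ r + (1 - s) ^ r = ((1 + s) ^ 2) ^ (r / 2) + ((1 - s) ^ 2) ^ (r / 2) := by
          rw [rpow_div_two_eq_sqrt _ (sq_nonneg _), rpow_div_two_eq_sqrt _ (sq_nonneg _),
            sqrt_sq (by linarith), sqrt_sq (by linarith)]
      _ ≤ 2 * (((1 + s) ^ 2 + (1 - s) ^ 2) / 2) ^ (r / 2) :=
          rpow_add_rpow_le_two_mul_add_div_two_rpow (by linarith) (by linarith) (by positivity)
            (by positivity)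
      _ ≤ 2 * ((1 + r / 2 * s ^ 2) ^ 2) ^ (r / 2) := by
          gcongr
          nlinarith
      _ = 2 * (1 + r / 2 * s ^ 2) ^ r := by
          rw [rpow_div_two_eq_sqrt _ (sq_nonneg _), sqrt_sq (by linarith)]

theorem one_add_rpow_sub_one_sub_rpow_lt {q s : ℝ} (hq : 1 ≤ q)
    (hS : ∀ s, 0 ≤ s → s ≤ 1 →
      (1 + s) ^ (q - 1) + (1 - s) ^ (q - 1) ≤ 2 * (1 + (q - 1) / 2 * s ^ 2) ^ (q - 1))
    (hs₀ : 0 < s) (hs₁ : s ≤ 1) :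
    (1 + s) ^ q - (1 - s) ^ q < 2 * q * s * (1 + q / 2 * s ^ 2) ^ q := by
  have hK := fun x => (((hasDerivAt_id x).const_mul (2 * q)).mul
    (hasDerivAt_one_add_mul_sq_rpow hq (q / 2) x)).sub
    (hasDerivAt_one_add_rpow_sub_one_sub_rpow hq x)
  have hK_lt := lt_of_hasDerivAt_of_pos hK (fun x hx => ?_) hs₀
  · norm_num at hK_lt
    linarith
  obtain ⟨hx₀, hx⟩ := hx
  have hM : 0 < 1 + q / 2 * x ^ 2 := by positivity
  have hMq :
      (1 + q / 2 * x ^ 2) ^ q = (1 + q / 2 * x ^ 2) ^ (q - 1) * (1 + q / 2 * x ^ 2) := by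
    rw [← rpow_add_one hM.ne', sub_add_cancel]
  have hA : (1 + x) ^ (q - 1) + (1 - x) ^ (q - 1) ≤ 2 * (1 + q / 2 * x ^ 2) ^ (q - 1) := by
    refine (hS x hx₀.le (by linarith)).trans ?_
    gcongr 2 * ?_ ^ _
    · nlinarith
  have hN : 0 < q * (q * ((1 + q / 2 * x ^ 2) ^ (q - 1) * x ^ 2)) := by positivity
  -- with `M = 1 + q / 2 * x ^ 2`, `hA` bounds the derivative below by `2 q M^(q-1) (M - 1 + q² x²)`
  simp only [id, mul_one, hMq]
  nlinarith [mul_le_mul_of_nonneg_left hA (by linarith : (0 : ℝ) ≤ q)]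

theorem one_add_rpow_add_one_sub_rpow_lt {r c s : ℝ} (hr : 1 ≤ r) (hc : r - 1 ≤ 2 * c)
    (hD : ∀ s, 0 < s → s ≤ 1 →
      (1 + s) ^ (r - 1) - (1 - s) ^ (r - 1)
        < 2 * (r - 1) * s * (1 + (r - 1) / 2 * s ^ 2) ^ (r - 1))
    (hs₀ : 0 < s) (hs₁ : s ≤ 1) :
    (1 + s) ^ r + (1 - s) ^ r < 2 * (1 + c * s ^ 2) ^ r := by
  have hH := fun x => ((hasDerivAt_one_add_mul_sq_rpow hr c x).const_mul 2).sub
    (hasDerivAt_one_add_rpow_add_one_sub_rpow hr x)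
  have hH_lt := lt_of_hasDerivAt_of_pos hH (fun x hx => ?_) hs₀
  · norm_num at hH_lt
    linarith
  obtain ⟨hx₀, hx⟩ := hx
  have hB :
      (1 + x) ^ (r - 1) - (1 - x) ^ (r - 1) < 2 * c * 2 * x * (1 + c * x ^ 2) ^ (r - 1) := by
    refine (hD x hx₀ (by linarith)).trans_le
      (mul_le_mul (by nlinarith) ?_ (by positivity) (by nlinarith))
    exact rpow_le_rpow (by nlinarith) (by nlinarith) (by linarith)
  nlinarith [mul_lt_mul_of_pos_left hB (by linarith : (0 : ℝ) < r)]

theorem one_add_rpow_add_one_sub_rpow_le {r s : ℝ} (hr : 0 ≤ r) (hs₀ : 0 ≤ s) (hs₁ : s ≤ 1) :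
    (1 + s) ^ r + (1 - s) ^ r ≤ 2 * (1 + r / 2 * s ^ 2) ^ r := by
  suffices ∀ n : ℕ, ∀ r : ℝ, 0 ≤ r → r ≤ 2 * n + 2 → ∀ s : ℝ, 0 ≤ s → s ≤ 1 →
      (1 + s) ^ r + (1 - s) ^ r ≤ 2 * (1 + r / 2 * s ^ 2) ^ r from
    this ⌈r / 2⌉₊ r hr (by linarith [Nat.le_ceil (r / 2)]) s hs₀ hs₁
  intro n
  induction n with
  | zero =>
    intro r hr₀ hr₂
    exact fun s => one_add_rpow_add_one_sub_rpow_le_of_le_two hr₀ (by simpa using hr₂)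
  | succ n ih =>
    intro r hr₀ hrn s hs₀ hs₁
    rcases le_total r 2 with hr₂ | hr₂
    · exact one_add_rpow_add_one_sub_rpow_le_of_le_two hr₀ hr₂ hs₀ hs₁
    rcases hs₀.eq_or_lt with rfl | hs₀
    · norm_num
    refine (one_add_rpow_add_one_sub_rpow_lt (by linarith) (by linarith) (fun s hs₀ hs₁ => ?_)
      hs₀ hs₁).le
    refine one_add_rpow_sub_one_sub_rpow_lt (by linarith) (ih _ (by linarith) ?_) hs₀ hs₁
    push_cast at hrn
    linarith

/-- For `2 ≤ p < ∞` and `0 < t ≤ 1`, the modulus of smoothness of `L_p`,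
`(((1+t)^p + (1−t)^p)/2)^{1/p} − 1`, is strictly less than `((p−1)/2) t²`. -/
theorem modSmooth_Lp_lt_of_two_le (p t : ℝ) (hp : 2 ≤ p) (ht0 : 0 < t) (ht1 : t ≤ 1) :
    (((1 + t) ^ p + (1 - t) ^ p) / 2) ^ (1 / p) - 1 < (p - 1) / 2 * t ^ 2 := by
  have hD : ∀ s, 0 < s → s ≤ 1 → (1 + s) ^ (p - 1) - (1 - s) ^ (p - 1)
      < 2 * (p - 1) * s * (1 + (p - 1) / 2 * s ^ 2) ^ (p - 1) := fun s hs₀ hs₁ =>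
    one_add_rpow_sub_one_sub_rpow_lt (by linarith)
      (fun s hs₀ hs₁ => one_add_rpow_add_one_sub_rpow_le (by linarith) hs₀ hs₁) hs₀ hs₁
  have hsum : (1 + t) ^ p + (1 - t) ^ p < 2 * (1 + (p - 1) / 2 * t ^ 2) ^ p :=
    one_add_rpow_add_one_sub_rpow_lt (by linarith) (by linarith) hD ht0 ht1
  have hA : 0 ≤ ((1 + t) ^ p + (1 - t) ^ p) / 2 := by
    have := rpow_nonneg (by linarith : (0 : ℝ) ≤ 1 - t) p
    positivity
  rw [one_div, sub_lt_iff_lt_add', rpow_inv_lt_iff_of_pos hA (by nlinarith) (by positivity)]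
  linarith
end
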